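/- Suppose μ ∈ (0, F*] and the strictly feasible flow f is 1/1000-centered for path parameter μ. Then ‖R(f)^{1/2} (f − f(μ))‖_∞ ≤ 1/10, i.e. r(f)_e^{1/2} · |f_e − f(μ)_e| ≤ 1/10 for every edge e. -/

import Mathlib

open Matrix

/-- The four Penrose conditions characterizing the Moore–Penrose pseudoinverse. -/
def IsMoorePenrose {n : Type*} [Fintype n] (M Md : Matrix n n ℝ) : Prop :=
  M * Md * M = M ∧ Md * M * Md = Md ∧ (M * Md)ᵀ = M * Md ∧ (Md * M)ᵀ = Md * M

/-- Resistances induced by a flow: `r(f)_e = u⁺(f)_e⁻² + u⁻(f)_e⁻²`. -/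
noncomputable def resist {E : Type*} (u f : E → ℝ) (e : E) : ℝ :=
  ((u e - f e) ^ 2)⁻¹ + ((u e + f e) ^ 2)⁻¹

/-- The Laplacian `L(f) = Bᵀ R(f)⁻¹ B` induced by the resistances of `f`. -/
noncomputable def lapOf {V E : Type*} [Fintype V] [Fintype E] [DecidableEq E]
    (B : Matrix E V ℝ) (u f : E → ℝ) : Matrix V V ℝ :=
  Bᵀ * Matrix.diagonal (fun e => (resist u f e)⁻¹) * B

/-- KKT characterization of the central path flow with parameter `μ`. -/
def IsCentralFlow {V E : Type*} [Fintype V] [Fintype E]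
    (B : Matrix E V ℝ) (u : E → ℝ) (χst : V → ℝ) (Fstar μ : ℝ) (f : E → ℝ) : Prop :=
  (∀ e, |f e| < u e) ∧ Bᵀ *ᵥ f = (Fstar - μ) • χst ∧
    ∃ φ : V → ℝ, ∀ e, (B *ᵥ φ) e = (u e - f e)⁻¹ - (u e + f e)⁻¹

/-- `f` is `γ`-centered for path parameter `μ`:
`‖Bᵀf − (F*−μ)χ_{st}‖_{L(f)†} ≤ γ` and there is `φ` with
`‖Bφ − (1/u⁺(f) − 1/u⁻(f))‖_{R(f)⁻¹} ≤ γ`, where `L(f)†` is the Moore–Penrose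
pseudoinverse of `L(f)` (specified by the Penrose conditions). -/
noncomputable def IsCenteredFlow {V E : Type*} [Fintype V] [Fintype E] [DecidableEq V]
    [DecidableEq E] (B : Matrix E V ℝ) (u : E → ℝ) (χst : V → ℝ)
    (Fstar γ μ : ℝ) (f : E → ℝ) : Prop :=
  ∃ Ld : Matrix V V ℝ, IsMoorePenrose (lapOf B u f) Ld ∧
    Real.sqrt ((Bᵀ *ᵥ f - (Fstar - μ) • χst) ⬝ᵥ
        (Ld *ᵥ (Bᵀ *ᵥ f - (Fstar - μ) • χst))) ≤ γ ∧
    ∃ φ : V → ℝ,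
      Real.sqrt (∑ e, (resist u f e)⁻¹ *
          ((B *ᵥ φ) e - ((u e - f e)⁻¹ - (u e + f e)⁻¹)) ^ 2) ≤ γ

/-!
Write `h = f − f(μ)`, `g = 1/u⁺ − 1/u⁻` for the barrier gradient and `p_e = (g(f) − g(f(μ)))_e h_e`,
which is nonnegative because the barrier is convex. A one-edge computation gives
`r_e h_e² ≤ 2p_e + 4p_e²` and `(g(f) − g(f(μ)))_e² / r_e ≤ 2p_e + 4p_e²`, so with `P = ∑ p_e`
both `‖h‖_R` and `‖g(f) − g(f(μ))‖_{R⁻¹}` are at most `X = √(2P + 4P²)`.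
Since `g(f(μ)) = Bφ(μ)`, the gap splits along the certificate `φ` of centrality as
`P = ⟨g(f) − Bφ, h⟩ + ⟨φ − φ(μ), Bᵀh⟩`. The first term is at most `γX` by Cauchy–Schwarz; for
the second, `Bᵀh` is the residual of `f` and lies in the range of `L(f)`, so it is at most
`‖B(φ − φ(μ))‖_{R⁻¹} ‖Bᵀh‖_{L†} ≤ (γ + X)γ`. Thus `P ≤ γ(2X + γ)`, which for `γ = 1/1000` forces
`X ≤ 1/10`, and each `√r_e |h_e|` is at most `‖h‖_R ≤ X`.
-/

open Finset

section WeightedNorm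

variable {ι : Type*} [Fintype ι]

noncomputable def weightedNorm (w x : ι → ℝ) : ℝ :=
  √(∑ i, w i * x i ^ 2)

variable {w : ι → ℝ}

theorem weightedNorm_sub_comm (x y : ι → ℝ) :
    weightedNorm w (x - y) = weightedNorm w (y - x) := by
  simp only [weightedNorm, Pi.sub_apply, sub_sq_comm]

theorem weightedNorm_sq (hw : ∀ i, 0 ≤ w i) (x : ι → ℝ) :
    weightedNorm w x ^ 2 = ∑ i, w i * x i ^ 2 :=
  Real.sq_sqrt (sum_nonneg fun i _ => mul_nonneg (hw i) (sq_nonneg _))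

theorem sum_mul_mul_le_weightedNorm_mul (hw : ∀ i, 0 ≤ w i) (x y : ι → ℝ) :
    ∑ i, w i * (x i * y i) ≤ weightedNorm w x * weightedNorm w y :=
  calc ∑ i, w i * (x i * y i) = ∑ i, (√(w i) * x i) * (√(w i) * y i) :=
        sum_congr rfl fun i _ => by rw [mul_mul_mul_comm, Real.mul_self_sqrt (hw i)]
    _ ≤ _ := Real.sum_mul_le_sqrt_mul_sqrt _ _ _
    _ = _ := by simp only [weightedNorm, mul_pow, Real.sq_sqrt (hw _)]

theorem sum_mul_le_weightedNorm_inv_mul (hw : ∀ i, 0 < w i) (x y : ι → ℝ) :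
    ∑ i, x i * y i ≤ weightedNorm w⁻¹ x * weightedNorm w y := by
  calc ∑ i, x i * y i = ∑ i, (w i)⁻¹ * (x i * (w i * y i)) :=
        sum_congr rfl fun i _ => by field_simp [(hw i).ne']
    _ ≤ weightedNorm w⁻¹ x * weightedNorm w⁻¹ (w * y) :=
        sum_mul_mul_le_weightedNorm_mul (fun i => (inv_pos.2 (hw i)).le) _ _
    _ = weightedNorm w⁻¹ x * weightedNorm w y := by
        simp only [weightedNorm, Pi.inv_apply, Pi.mul_apply]
        congr 2
        exact sum_congr rfl fun i _ => by field_simp [(hw i).ne']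

theorem weightedNorm_add_le (hw : ∀ i, 0 ≤ w i) (x y : ι → ℝ) :
    weightedNorm w (x + y) ≤ weightedNorm w x + weightedNorm w y := by
  have hexpand : ∑ i, w i * (x + y) i ^ 2 =
      ∑ i, w i * x i ^ 2 + 2 * ∑ i, w i * (x i * y i) + ∑ i, w i * y i ^ 2 := by
    simp only [Pi.add_apply, mul_sum, ← sum_add_distrib]
    exact sum_congr rfl fun i _ => by ring
  rw [weightedNorm, Real.sqrt_le_left (by unfold weightedNorm; positivity), hexpand, add_sq,
    weightedNorm_sq hw, weightedNorm_sq hw]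
  nlinarith [sum_mul_mul_le_weightedNorm_mul hw x y]

theorem sqrt_mul_abs_le_weightedNorm (hw : ∀ i, 0 ≤ w i) (x : ι → ℝ) (i : ι) :
    √(w i) * |x i| ≤ weightedNorm w x := by
  rw [← Real.sqrt_sq (abs_nonneg (x i)), ← Real.sqrt_mul (hw i), sq_abs]
  exact Real.sqrt_le_sqrt <|
    single_le_sum (fun j _ => mul_nonneg (hw j) (sq_nonneg (x j))) (mem_univ i)

end WeightedNorm

theorem IsMoorePenrose.dotProduct_mulVec_mulVec_self {V : Type*} [Fintype V]
    {M Md : Matrix V V ℝ} (hMd : IsMoorePenrose M Md) (hM : Mᵀ = M) (z : V → ℝ) :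
    (M *ᵥ z) ⬝ᵥ (Md *ᵥ (M *ᵥ z)) = z ⬝ᵥ (M *ᵥ z) := by
  have hvec : M *ᵥ z = z ᵥ* M := by rw [← vecMul_transpose, hM]
  calc (M *ᵥ z) ⬝ᵥ (Md *ᵥ (M *ᵥ z)) = (z ᵥ* M) ⬝ᵥ (Md *ᵥ (M *ᵥ z)) := by
        nth_rw 1 [hvec]
    _ = z ⬝ᵥ ((M * Md * M) *ᵥ z) := by rw [← dotProduct_mulVec, mulVec_mulVec, mulVec_mulVec]
    _ = z ⬝ᵥ (M *ᵥ z) := by rw [hMd.1]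

section Laplacian

variable {V E : Type*} [Fintype E] [DecidableEq E]

theorem transpose_mul_diagonal_mul_transpose (B : Matrix E V ℝ) (w : E → ℝ) :
    (Bᵀ * diagonal w * B)ᵀ = Bᵀ * diagonal w * B := by
  rw [transpose_mul, transpose_mul, transpose_transpose, diagonal_transpose, Matrix.mul_assoc]

theorem dotProduct_transpose_mul_diagonal_mul_mulVec [Fintype V] (B : Matrix E V ℝ)
    (w : E → ℝ) (ψ z : V → ℝ) :
    ψ ⬝ᵥ ((Bᵀ * diagonal w * B) *ᵥ z) = ∑ e, w e * ((B *ᵥ ψ) e * (B *ᵥ z) e) := by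
  rw [Matrix.mul_assoc, ← mulVec_mulVec, dotProduct_mulVec, vecMul_transpose,
    ← mulVec_mulVec]
  simp only [dotProduct, mulVec_diagonal]
  exact sum_congr rfl fun e _ => by ring

theorem range_transpose_mul_diagonal_mul [Fintype V] [DecidableEq V] {w : E → ℝ}
    (hw : ∀ e, 0 < w e) (B : Matrix E V ℝ) :
    LinearMap.range (Bᵀ * diagonal w * B).mulVecLin = LinearMap.range Bᵀ.mulVecLin := by
  set C := diagonal (fun e => √(w e)) * B
  have hCC : Cᵀ * C = Bᵀ * diagonal w * B := by
    simp only [C, transpose_mul, diagonal_transpose, Matrix.mul_assoc,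
      ← Matrix.mul_assoc (diagonal _) (diagonal _) B, diagonal_mul_diagonal,
      Real.mul_self_sqrt (hw _).le]
  have hrank : (Bᵀ * diagonal w * B).rank = Bᵀ.rank := by
    rw [← hCC, rank_transpose_mul_self, rank_transpose,
      rank_mul_eq_right_of_det_ne_zero _ _ ?_]
    simp [det_diagonal, prod_ne_zero_iff, Real.sqrt_ne_zero', hw]
  refine Submodule.eq_of_le_of_finrank_eq ?_ hrank
  rw [Matrix.mul_assoc, mulVecLin_mul]
  exact LinearMap.range_comp_le_range _ _

/-- Cauchy–Schwarz for the pair of dual seminorms `‖B·‖_w` and `‖·‖_{L†}`, `L = Bᵀ diag(w) B`. -/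
theorem dotProduct_transpose_mulVec_le [Fintype V] [DecidableEq V] {B : Matrix E V ℝ}
    {w : E → ℝ} (hw : ∀ e, 0 < w e) {Ld : Matrix V V ℝ}
    (hLd : IsMoorePenrose (Bᵀ * diagonal w * B) Ld) (ψ : V → ℝ) (h : E → ℝ) :
    ψ ⬝ᵥ (Bᵀ *ᵥ h) ≤ weightedNorm w (B *ᵥ ψ) * √((Bᵀ *ᵥ h) ⬝ᵥ (Ld *ᵥ (Bᵀ *ᵥ h))) := by
  obtain ⟨z, hz⟩ : Bᵀ *ᵥ h ∈ LinearMap.range (Bᵀ * diagonal w * B).mulVecLin := by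
    rw [range_transpose_mul_diagonal_mul hw]
    exact ⟨h, rfl⟩
  rw [Matrix.mulVecLin_apply] at hz
  have hnorm : weightedNorm w (B *ᵥ z) = √((Bᵀ *ᵥ h) ⬝ᵥ (Ld *ᵥ (Bᵀ *ᵥ h))) := by
    rw [← hz, hLd.dotProduct_mulVec_mulVec_self (transpose_mul_diagonal_mul_transpose B w),
      dotProduct_transpose_mul_diagonal_mul_mulVec, weightedNorm]
    simp only [sq]
  rw [← hnorm, ← hz, dotProduct_transpose_mul_diagonal_mul_mulVec]
  exact sum_mul_mul_le_weightedNorm_mul (fun e => (hw e).le) _ _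

end Laplacian

theorem sq_le_two_mul_add_four_mul_sq {t p : ℝ} (ht : 0 ≤ t) (hp : 0 ≤ p)
    (h : t ^ 2 ≤ p * (1 + t)) : t ^ 2 ≤ 2 * p + 4 * p ^ 2 := by
  rcases le_or_gt t 1 with ht1 | ht1
  · nlinarith
  · have : t ≤ 2 * p := le_of_mul_le_mul_right (by nlinarith) (zero_lt_one.trans ht1)
    nlinarith

theorem inv_sq_le_one_add_mul_inv_mul {a a' t : ℝ} (ha : 0 < a) (ha' : 0 < a')
    (h : |a' - a| ≤ a * t) : (a ^ 2)⁻¹ ≤ (1 + t) * (a * a')⁻¹ := by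
  have hdiff : (1 + t) * (a * a')⁻¹ - (a ^ 2)⁻¹ = ((1 + t) * a - a') / (a ^ 2 * a') := by
    field_simp
  rw [← sub_nonneg, hdiff]
  exact div_nonneg (by linarith [le_abs_self (a' - a)]) (by positivity)

theorem inv_mul_le_two_mul_inv_sq {a a' t : ℝ} (ha : 0 < a) (ha' : 0 < a')
    (h : |a' - a| ≤ a * t) (ht : t ≤ 1 / 2) : (a * a')⁻¹ ≤ 2 * (a ^ 2)⁻¹ := by
  have hdiff : 2 * (a ^ 2)⁻¹ - (a * a')⁻¹ = (2 * a' - a) / (a ^ 2 * a') := by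
    field_simp
  rw [← sub_nonneg, hdiff]
  exact div_nonneg (by nlinarith [neg_abs_le (a' - a)]) (by positivity)

section Barrier

/-- The derivative `1/u⁺ − 1/u⁻` of the one-edge barrier `−log(u − x) − log(u + x)`. -/
noncomputable def barrierDeriv (u x : ℝ) : ℝ := (u - x)⁻¹ - (u + x)⁻¹

/-- The second derivative of the one-edge barrier; `resist u f e = barrierHess (u e) (f e)`. -/
noncomputable def barrierHess (u x : ℝ) : ℝ := ((u - x) ^ 2)⁻¹ + ((u + x) ^ 2)⁻¹

/-- The slope of the secant of `barrierDeriv u` between `y` and `x`. -/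
noncomputable def barrierSlope (u x y : ℝ) : ℝ := ((u - x) * (u - y))⁻¹ + ((u + x) * (u + y))⁻¹

variable {u x y : ℝ}

theorem barrierDeriv_sub_barrierDeriv (hx : |x| < u) (hy : |y| < u) :
    barrierDeriv u x - barrierDeriv u y = (x - y) * barrierSlope u x y := by
  obtain ⟨hx₁, hx₂⟩ := abs_lt.1 hx
  obtain ⟨hy₁, hy₂⟩ := abs_lt.1 hy
  have : u - x ≠ 0 := by linarith
  have : u + x ≠ 0 := by linarith
  have : u - y ≠ 0 := by linarith
  have : u + y ≠ 0 := by linarith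
  simp only [barrierDeriv, barrierSlope]
  field_simp
  ring

theorem barrierSlope_pos (hx : |x| < u) (hy : |y| < u) : 0 < barrierSlope u x y := by
  obtain ⟨hx₁, hx₂⟩ := abs_lt.1 hx
  obtain ⟨hy₁, hy₂⟩ := abs_lt.1 hy
  unfold barrierSlope
  have : 0 < (u - x) * (u - y) := mul_pos (by linarith) (by linarith)
  have : 0 < (u + x) * (u + y) := mul_pos (by linarith) (by linarith)
  positivity

theorem barrierHess_pos (hx : |x| < u) : 0 < barrierHess u x := by
  obtain ⟨hx₁, hx₂⟩ := abs_lt.1 hx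
  unfold barrierHess
  have : 0 < u - x := by linarith
  have : 0 < u + x := by linarith
  positivity

/-- Both `u ∓ x` are at least `1 / √(barrierHess u x)`. -/
theorem abs_sub_le_mul_sqrt_barrierHess (hx : |x| < u) (y : ℝ) :
    |x - y| ≤ (u - x) * (√(barrierHess u x) * |x - y|) ∧
      |x - y| ≤ (u + x) * (√(barrierHess u x) * |x - y|) := by
  obtain ⟨hx₁, hx₂⟩ := abs_lt.1 hx
  have key : ∀ a : ℝ, 0 < a → (a ^ 2)⁻¹ ≤ barrierHess u x →
      |x - y| ≤ a * (√(barrierHess u x) * |x - y|) := fun a ha hle => by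
    have : 1 ≤ a * √(barrierHess u x) := by
      rw [← div_le_iff₀' ha, one_div, Real.le_sqrt (by positivity) (hle.trans' (by positivity)),
        inv_pow]
      exact hle
    nlinarith [abs_nonneg (x - y)]
  exact ⟨key _ (by linarith) (le_add_of_nonneg_right (by positivity)),
    key _ (by linarith) (le_add_of_nonneg_left (by positivity))⟩

theorem barrierHess_le_barrierSlope_mul (hx : |x| < u) (hy : |y| < u) :
    barrierHess u x ≤ barrierSlope u x y * (1 + √(barrierHess u x) * |x - y|) := by
  obtain ⟨hx₁, hx₂⟩ := abs_lt.1 hx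
  obtain ⟨hy₁, hy₂⟩ := abs_lt.1 hy
  obtain ⟨hminus, hplus⟩ := abs_sub_le_mul_sqrt_barrierHess hx y
  have h₁ := inv_sq_le_one_add_mul_inv_mul (a := u - x) (a' := u - y) (by linarith)
    (by linarith) (by rw [sub_sub_sub_cancel_left]; exact hminus)
  have h₂ := inv_sq_le_one_add_mul_inv_mul (a := u + x) (a' := u + y) (by linarith)
    (by linarith) (by rw [add_sub_add_left_eq_sub, abs_sub_comm]; exact hplus)
  calc barrierHess u x = ((u - x) ^ 2)⁻¹ + ((u + x) ^ 2)⁻¹ := rfl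
    _ ≤ _ := by unfold barrierSlope; linear_combination h₁ + h₂

theorem barrierSlope_le_two_mul_barrierHess (hx : |x| < u) (hy : |y| < u)
    (ht : √(barrierHess u x) * |x - y| ≤ 1 / 2) :
    barrierSlope u x y ≤ 2 * barrierHess u x := by
  obtain ⟨hx₁, hx₂⟩ := abs_lt.1 hx
  obtain ⟨hy₁, hy₂⟩ := abs_lt.1 hy
  obtain ⟨hminus, hplus⟩ := abs_sub_le_mul_sqrt_barrierHess hx y
  have h₁ := inv_mul_le_two_mul_inv_sq (a := u - x) (a' := u - y) (by linarith)
    (by linarith) (by rw [sub_sub_sub_cancel_left]; exact hminus) ht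
  have h₂ := inv_mul_le_two_mul_inv_sq (a := u + x) (a' := u + y) (by linarith)
    (by linarith) (by rw [add_sub_add_left_eq_sub, abs_sub_comm]; exact hplus) ht
  simp only [barrierHess, barrierSlope]
  linarith

theorem barrierDeriv_sub_mul_sub_eq (hx : |x| < u) (hy : |y| < u) :
    (barrierDeriv u x - barrierDeriv u y) * (x - y) = (x - y) ^ 2 * barrierSlope u x y := by
  rw [barrierDeriv_sub_barrierDeriv hx hy]
  ring

theorem barrierDeriv_sub_mul_sub_nonneg (hx : |x| < u) (hy : |y| < u) :
    0 ≤ (barrierDeriv u x - barrierDeriv u y) * (x - y) := by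
  rw [barrierDeriv_sub_mul_sub_eq hx hy]
  exact mul_nonneg (sq_nonneg _) (barrierSlope_pos hx hy).le

theorem barrierHess_mul_sq_le (hx : |x| < u) (hy : |y| < u) :
    barrierHess u x * (x - y) ^ 2 ≤
      2 * ((barrierDeriv u x - barrierDeriv u y) * (x - y)) +
        4 * ((barrierDeriv u x - barrierDeriv u y) * (x - y)) ^ 2 := by
  have ht : (√(barrierHess u x) * |x - y|) ^ 2 = barrierHess u x * (x - y) ^ 2 := by
    rw [mul_pow, Real.sq_sqrt (barrierHess_pos hx).le, sq_abs]
  rw [← ht]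
  refine sq_le_two_mul_add_four_mul_sq (by positivity) (barrierDeriv_sub_mul_sub_nonneg hx hy) ?_
  rw [ht, barrierDeriv_sub_mul_sub_eq hx hy]
  linear_combination
    mul_le_mul_of_nonneg_right (barrierHess_le_barrierSlope_mul hx hy) (sq_nonneg (x - y))

theorem barrierHess_inv_mul_sq_le (hx : |x| < u) (hy : |y| < u) :
    (barrierHess u x)⁻¹ * (barrierDeriv u x - barrierDeriv u y) ^ 2 ≤
      2 * ((barrierDeriv u x - barrierDeriv u y) * (x - y)) +
        4 * ((barrierDeriv u x - barrierDeriv u y) * (x - y)) ^ 2 := by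
  set H := barrierHess u x
  set S := barrierSlope u x y
  set t := √H * |x - y|
  have hH : 0 < H := barrierHess_pos hx
  have hS : 0 < S := barrierSlope_pos hx hy
  have hp := barrierDeriv_sub_mul_sub_nonneg hx hy
  have ht : t ^ 2 = H * (x - y) ^ 2 := by
    rw [mul_pow, Real.sq_sqrt hH.le, sq_abs]
  rw [barrierDeriv_sub_barrierDeriv hx hy] at hp ⊢
  rcases le_or_gt t (1 / 2) with ht₂ | ht₂
  · have hSH := barrierSlope_le_two_mul_barrierHess hx hy ht₂
    have : H⁻¹ * ((x - y) * S) ^ 2 ≤ 2 * ((x - y) * S * (x - y)) := by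
      rw [inv_mul_le_iff₀ hH]
      nlinarith [mul_le_mul_of_nonneg_left hSH (mul_nonneg (sq_nonneg (x - y)) hS.le)]
    nlinarith
  · have hprod : H⁻¹ * ((x - y) * S) ^ 2 * t ^ 2 = ((x - y) * S * (x - y)) ^ 2 := by
      rw [ht]
      field_simp
    have ht₄ : 1 / 4 ≤ t ^ 2 := by nlinarith
    have : H⁻¹ * ((x - y) * S) ^ 2 ≤ 4 * ((x - y) * S * (x - y)) ^ 2 := by
      nlinarith [mul_le_mul_of_nonneg_left ht₄ (by positivity : 0 ≤ H⁻¹ * ((x - y) * S) ^ 2)]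
    nlinarith

end Barrier

theorem sum_sub_mulVec_mul_le {V E : Type*} [Fintype V] [DecidableEq V] [Fintype E]
    [DecidableEq E] {B : Matrix E V ℝ} {r : E → ℝ} (hr : ∀ e, 0 < r e) {Ld : Matrix V V ℝ}
    (hLd : IsMoorePenrose (Bᵀ * diagonal r⁻¹ * B) Ld) (φ φ' : V → ℝ) (c h : E → ℝ) :
    ∑ e, (c e - (B *ᵥ φ') e) * h e ≤
      weightedNorm r⁻¹ (B *ᵥ φ - c) * weightedNorm r h +
        (weightedNorm r⁻¹ (B *ᵥ φ - c) + weightedNorm r⁻¹ (c - B *ᵥ φ')) *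
          √((Bᵀ *ᵥ h) ⬝ᵥ (Ld *ᵥ (Bᵀ *ᵥ h))) := by
  have hr' : ∀ e, 0 < r⁻¹ e := fun e => inv_pos.2 (hr e)
  have hsplit : ∑ e, (c e - (B *ᵥ φ') e) * h e =
      ∑ e, (c - B *ᵥ φ) e * h e + (φ - φ') ⬝ᵥ (Bᵀ *ᵥ h) := by
    rw [dotProduct_mulVec, vecMul_transpose, mulVec_sub, dotProduct, ← sum_add_distrib]
    exact sum_congr rfl fun e _ => by simp only [Pi.sub_apply]; ring
  have hdiff : B *ᵥ (φ - φ') = (B *ᵥ φ - c) + (c - B *ᵥ φ') := by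
    rw [mulVec_sub]; abel
  rw [hsplit]
  gcongr
  · rw [weightedNorm_sub_comm]
    exact sum_mul_le_weightedNorm_inv_mul hr _ _
  · calc (φ - φ') ⬝ᵥ (Bᵀ *ᵥ h)
        ≤ weightedNorm r⁻¹ (B *ᵥ (φ - φ')) * √((Bᵀ *ᵥ h) ⬝ᵥ (Ld *ᵥ (Bᵀ *ᵥ h))) :=
          dotProduct_transpose_mulVec_le hr' hLd _ _
      _ ≤ _ := by
          rw [hdiff]
          gcongr
          exact weightedNorm_add_le (fun e => (hr' e).le) _ _

theorem sum_le_two_mul_sum_add_four_mul_sq_sum {ι : Type*} [Fintype ι] {p q : ι → ℝ}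
    (hp : ∀ i, 0 ≤ p i) (hq : ∀ i, q i ≤ 2 * p i + 4 * p i ^ 2) :
    ∑ i, q i ≤ 2 * ∑ i, p i + 4 * (∑ i, p i) ^ 2 :=
  calc ∑ i, q i ≤ ∑ i, (2 * p i + 4 * p i ^ 2) := sum_le_sum fun i _ => hq i
    _ = 2 * ∑ i, p i + 4 * ∑ i, p i ^ 2 := by rw [sum_add_distrib, ← mul_sum, ← mul_sum]
    _ ≤ 2 * ∑ i, p i + 4 * (∑ i, p i) ^ 2 := by
        gcongr
        exact sum_sq_le_sq_sum_of_nonneg fun i _ => hp i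

theorem sqrt_two_mul_add_four_mul_sq_le {P : ℝ} (hP : 0 ≤ P)
    (h : P ≤ 1 / 1000 * (2 * √(2 * P + 4 * P ^ 2) + 1 / 1000)) :
    √(2 * P + 4 * P ^ 2) ≤ 1 / 10 := by
  set X := √(2 * P + 4 * P ^ 2)
  have hX : X ^ 2 = 2 * P + 4 * P ^ 2 := Real.sq_sqrt (by positivity)
  nlinarith [Real.sqrt_nonneg (2 * P + 4 * P ^ 2)]

theorem centered_implies_linf_close_general {V E : Type*} [Fintype V] [Fintype E] [DecidableEq V]
    [DecidableEq E]
    (u : E → ℝ)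
    (B : Matrix E V ℝ)
    (χst : V → ℝ)
    (Fstar : ℝ)
    (μ : ℝ)
    (fμ : E → ℝ) (hfμ : IsCentralFlow B u χst Fstar μ fμ)
    (f : E → ℝ) (hfeas : ∀ e, |f e| < u e)
    (hcent : IsCenteredFlow B u χst Fstar (1 / 1000) μ f) :
    ∀ e : E, Real.sqrt (resist u f e) * |f e - fμ e| ≤ 1 / 10 := by
  obtain ⟨Ld, hLd, hdiv, φ, hφ⟩ := hcent
  obtain ⟨hfμ_lt, hfμ_div, φμ, hφμ⟩ := hfμ
  set r := resist u f
  set c : E → ℝ := fun e => barrierDeriv (u e) (f e)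
  set p : E → ℝ := fun e => (c e - barrierDeriv (u e) (fμ e)) * (f e - fμ e)
  set X := √(2 * ∑ e, p e + 4 * (∑ e, p e) ^ 2)
  have hr : ∀ e, 0 < r e := fun e => barrierHess_pos (hfeas e)
  have hp : ∀ e, 0 ≤ p e := fun e => barrierDeriv_sub_mul_sub_nonneg (hfeas e) (hfμ_lt e)
  have hBφμ : B *ᵥ φμ = fun e => barrierDeriv (u e) (fμ e) := funext hφμ
  have hflow : weightedNorm r (f - fμ) ≤ X := Real.sqrt_le_sqrt <|
    sum_le_two_mul_sum_add_four_mul_sq_sum hp fun e => barrierHess_mul_sq_le (hfeas e) (hfμ_lt e)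
  have hgrad : weightedNorm r⁻¹ (c - B *ᵥ φμ) ≤ X := Real.sqrt_le_sqrt <| by
    rw [hBφμ]
    exact sum_le_two_mul_sum_add_four_mul_sq_sum hp fun e =>
      barrierHess_inv_mul_sq_le (hfeas e) (hfμ_lt e)
  have hφ' : weightedNorm r⁻¹ (B *ᵥ φ - c) ≤ 1 / 1000 := hφ
  rw [← hfμ_div, ← mulVec_sub] at hdiv
  have hgap : ∑ e, p e ≤ 1 / 1000 * (2 * X + 1 / 1000) :=
    calc ∑ e, p e = ∑ e, (c e - (B *ᵥ φμ) e) * (f - fμ) e := by rw [hBφμ]; rfl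
      _ ≤ _ := sum_sub_mulVec_mul_le hr hLd φ φμ c (f - fμ)
      _ ≤ 1 / 1000 * X + (1 / 1000 + X) * (1 / 1000) := by
          gcongr
          exact Real.sqrt_nonneg _
      _ = 1 / 1000 * (2 * X + 1 / 1000) := by ring
  intro e
  calc √(resist u f e) * |f e - fμ e| ≤ weightedNorm r (f - fμ) :=
        sqrt_mul_abs_le_weightedNorm (fun e => (hr e).le) (f - fμ) e
    _ ≤ X := hflow
    _ ≤ 1 / 10 := sqrt_two_mul_add_four_mul_sq_le (sum_nonneg fun e _ => hp e) hgap

/-- Lemma `recentererror`: if a strictly feasible flow `f` is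
`1/1000`-centered for path parameter `μ`, then `‖R(f)^{1/2}(f − f(μ))‖_∞ ≤ 1/10`. -/
theorem centered_implies_linf_close {V E : Type*} [Fintype V] [Fintype E] [DecidableEq V]
    [DecidableEq E]
    (head tail : E → V) (s t : V) (hst : s ≠ t)
    (u : E → ℝ) (hu : ∀ e, 0 < u e)
    (B : Matrix E V ℝ)
    (hB : ∀ e v, B e v = (if v = head e then (1 : ℝ) else 0) - (if v = tail e then 1 else 0))
    (χst : V → ℝ)
    (hχ : χst = fun v => (if v = t then (1 : ℝ) else 0) - (if v = s then 1 else 0))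
    (hconn : ∀ x : V → ℝ, (∀ e, x (head e) = x (tail e)) → ∀ v w : V, x v = x w)
    (Fstar : ℝ)
    (hFstar : IsGreatest
      {F : ℝ | ∃ f : E → ℝ, (∀ e, |f e| ≤ u e) ∧ Bᵀ *ᵥ f = F • χst} Fstar)
    (μ : ℝ) (hμ0 : 0 < μ) (hμF : μ ≤ Fstar)
    (fμ : E → ℝ) (hfμ : IsCentralFlow B u χst Fstar μ fμ)
    (f : E → ℝ) (hfeas : ∀ e, |f e| < u e)
    (hcent : IsCenteredFlow B u χst Fstar (1 / 1000) μ f) :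
    ∀ e : E, Real.sqrt (resist u f e) * |f e - fμ e| ≤ 1 / 10 :=
  centered_implies_linf_close_general u B χst Fstar μ fμ hfμ f hfeas hcent
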